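/- Let G be a finitely generated infinite monotilable amenable group. Then for any finite set C ⊆ G, any free measure-preserving G-action Q on a probability space Y, any ε > 0, and any tile F ⊆ G, there exist a finite set G₀ ⊆ G and a measurable set E ⊆ Y such that: (1) G₀ = ⊔_i F c_i for a finite collection {c_i} ⊆ G; (2) #(g G₀ △ G₀) < ε · #G₀ for all g ∈ C; (3) 3(#F)^2 / #G₀ < ε; (4) the sets {Q^g E}_{g ∈ G₀} are pairwise disjoint with total measure at least 1 − ε. -/

import Mathlib

open MeasureTheory Filter Topology
open scoped symmDiff Pointwise

/-- `F` is a tile of the (countable) group `G`: `G` is a disjoint union of right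
translates `F cᵢ`. -/
def IsTile {G : Type*} [Group G] [DecidableEq G] (F : Finset G) : Prop :=
  ∃ c : ℕ → G, ∀ x : G, ∃! i : ℕ, x ∈ F.image (· * c i)

def IsMPAction {Y : Type*} [MeasurableSpace Y] {G : Type*} [Group G]
    (ν : Measure Y) (Q : G → Y → Y) : Prop :=
  (∀ g : G, MeasurePreserving (Q g) ν ν) ∧
    (∀ g h : G, ∀ y : Y, Q (g * h) y = Q g (Q h y)) ∧ (∀ y : Y, Q 1 y = y)

/-! Take a Følner set `F'` that is a tile, `δ`-invariant under `C ∪ F F⁻¹` and large compared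
with `#F`, and let `G₀` be the union of the translates `F cᵢ` of the tiling by `F` that lie
inside `F'`. Every point of the `F F⁻¹`-interior of `F'` lies in such a translate, so `G₀` misses
at most a `#F² δ` fraction of `F'`. Hence `G₀` inherits the almost invariance and the size of
`F'`, and the Rokhlin tower over `F'` restricts to a tower over `G₀` that loses only that
fraction of its measure. -/

open Finset

section Combinatorics

variable {G : Type*} [Group G] [DecidableEq G]

namespace Finset

def sInterior (s S : Finset G) : Finset G := {x ∈ s | ∀ g ∈ S, g * x ∈ s}

variable {S s t : Finset G} {δ : ℝ}

lemma card_sdiff_inv_smul (g : G) : #(s \ g⁻¹ • s) = #(s \ g • s) := by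
  rw [← card_smul_finset g, smul_finset_sdiff, smul_inv_smul,
    card_sdiff_comm (card_smul_finset g s).symm]

lemma sdiff_sInterior_subset : s \ s.sInterior S ⊆ S.biUnion fun g => s \ g⁻¹ • s := by
  intro x hx
  simp only [sInterior, mem_sdiff, mem_filter, not_and, not_forall] at hx
  obtain ⟨hxs, hx⟩ := hx
  obtain ⟨g, hg, hgx⟩ := hx hxs
  exact mem_biUnion.2 ⟨g, hg, mem_sdiff.2 ⟨hxs, by rwa [mem_inv_smul_finset_iff]⟩⟩

lemma card_sdiff_sInterior_le (hs : ∀ g ∈ S, (#(s \ g • s) : ℝ) ≤ δ * #s) :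
    (#(s \ s.sInterior S) : ℝ) ≤ #S * δ * #s := by
  calc (#(s \ s.sInterior S) : ℝ) ≤ ∑ g ∈ S, (#(s \ g⁻¹ • s) : ℝ) := by
        exact_mod_cast (card_le_card sdiff_sInterior_subset).trans card_biUnion_le
    _ ≤ ∑ _g ∈ S, δ * #s := sum_le_sum fun g hg => by rw [card_sdiff_inv_smul]; exact hs g hg
    _ = #S * δ * #s := by rw [sum_const, nsmul_eq_mul, mul_assoc]

lemma sInterior_nonempty (hs₀ : s.Nonempty) (hSδ : #S * δ < 1)
    (hs : ∀ g ∈ S, (#(s \ g • s) : ℝ) ≤ δ * #s) : (s.sInterior S).Nonempty := by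
  have hpos : (0 : ℝ) < #s := by exact_mod_cast hs₀.card_pos
  have hlt : #(s \ s.sInterior S) < #s := by
    have : (#S : ℝ) * δ * #s < #s := by nlinarith
    exact_mod_cast (card_sdiff_sInterior_le hs).trans_lt this
  by_contra h
  rw [not_nonempty_iff_eq_empty.1 h, sdiff_empty] at hlt
  exact hlt.false

lemma card_le_of_mem_sInterior {x : G} (hx : x ∈ s.sInterior S) : #S ≤ #s := by
  rw [← card_image_of_injective S (mul_left_injective x)]
  refine card_le_card fun y hy => ?_
  obtain ⟨g, hg, rfl⟩ := mem_image.1 hy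
  exact (mem_filter.1 hx).2 g hg

lemma card_smul_symmDiff (g : G) : #((g • s) ∆ s) = 2 * #(s \ g • s) := by
  rw [symmDiff_def, sup_eq_union, card_union_of_disjoint disjoint_sdiff_sdiff,
    card_sdiff_comm (card_smul_finset g s)]
  ring

lemma card_smul_symmDiff_le_of_subset (g : G) (hts : t ⊆ s) :
    #((g • t) ∆ t) ≤ 2 * #(s \ g • s) + 2 * #(s \ t) := by
  have hgts : #((g • t) ∆ (g • s)) = #(s \ t) := by
    rw [← smul_finset_symmDiff, card_smul_finset, symmDiff_of_le hts]
  calc #((g • t) ∆ t) ≤ #((g • t) ∆ (g • s)) + #((g • s) ∆ s) + #(s ∆ t) := by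
        refine (card_le_card (symmDiff_triangle (g • t) (g • s) t)).trans ?_
        have := (card_le_card (symmDiff_triangle (g • s) s t)).trans (card_union_le _ _)
        exact (card_union_le _ _).trans (by omega)
    _ = 2 * #(s \ g • s) + 2 * #(s \ t) := by
        rw [hgts, card_smul_symmDiff, symmDiff_of_ge hts]; ring

end Finset

def IsFolnerSeq (Fseq : ℕ → Finset G) : Prop :=
  ∀ g : G, Tendsto (fun i => ((#((Fseq i).image (g * ·) ∩ Fseq i) : ℝ) / #(Fseq i)))
    atTop (𝓝 1)

namespace IsFolnerSeq

variable {Fseq : ℕ → Finset G}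

lemma eventually_nonempty (hF : IsFolnerSeq Fseq) : ∀ᶠ i in atTop, (Fseq i).Nonempty := by
  filter_upwards [(hF 1).eventually (lt_mem_nhds one_pos)] with i hi
  rw [nonempty_iff_ne_empty]
  rintro h
  simp [h] at hi

lemma eventually_card_sdiff_smul_le (hF : IsFolnerSeq Fseq) (g : G) {δ : ℝ} (hδ : 0 < δ) :
    ∀ᶠ i in atTop, (#(Fseq i \ g • Fseq i) : ℝ) ≤ δ * #(Fseq i) := by
  filter_upwards [(hF g).eventually (lt_mem_nhds (sub_lt_self 1 hδ)), hF.eventually_nonempty]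
    with i hi hne
  rw [lt_div_iff₀ (by exact_mod_cast hne.card_pos)] at hi
  have hsplit := card_sdiff_add_card_inter (Fseq i) (g • Fseq i)
  rw [inter_comm] at hsplit
  have : (#(Fseq i \ g • Fseq i) : ℝ) + #(g • Fseq i ∩ Fseq i) = #(Fseq i) := by
    exact_mod_cast hsplit
  change _ < (#(g • Fseq i ∩ Fseq i) : ℝ) at hi
  linarith

lemma eventually_forall_card_sdiff_smul_le (hF : IsFolnerSeq Fseq) (S : Finset G) {δ : ℝ}
    (hδ : 0 < δ) :
    ∀ᶠ i in atTop, ∀ g ∈ S, (#(Fseq i \ g • Fseq i) : ℝ) ≤ δ * #(Fseq i) :=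
  (eventually_all_finset S).2 fun g _ => hF.eventually_card_sdiff_smul_le g hδ

lemma tendsto_card [Infinite G] (hF : IsFolnerSeq Fseq) :
    Tendsto (fun i => #(Fseq i)) atTop atTop := by
  refine tendsto_atTop.2 fun m => ?_
  obtain ⟨S, rfl⟩ := Infinite.exists_subset_card_eq G m
  have hδ : (0 : ℝ) < 1 / (#S + 1) := by positivity
  have hSδ : (#S : ℝ) * (1 / (#S + 1)) < 1 := by
    rw [mul_one_div, div_lt_one (by positivity)]
    linarith
  filter_upwards [hF.eventually_nonempty, hF.eventually_forall_card_sdiff_smul_le S hδ]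
    with i hne hinv
  obtain ⟨x, hx⟩ := sInterior_nonempty hne hSδ hinv
  exact card_le_of_mem_sInterior hx

end IsFolnerSeq

def IsTranslateUnion (F t : Finset G) : Prop :=
  ∃ n : ℕ, ∃ c : Fin n → G,
    (∀ i j : Fin n, i ≠ j → Disjoint (F.image (· * c i)) (F.image (· * c j))) ∧
    t = univ.biUnion fun i : Fin n => F.image (· * c i)

lemma exists_isTranslateUnion_subset_superset_sInterior {F : Finset G} {c : ℕ → G}
    (hc : ∀ x : G, ∃! i : ℕ, x ∈ F.image (· * c i)) (s : Finset G) :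
    ∃ t, IsTranslateUnion F t ∧ t ⊆ s ∧ s.sInterior (F * F⁻¹) ⊆ t := by
  choose idx hidx huniq using hc
  set J : Finset ℕ := {j ∈ s.image idx | F.image (· * c j) ⊆ s}
  set e : Fin #J ≃ J := J.equivFin.symm
  refine ⟨univ.biUnion fun i => F.image (· * c (e i)), ⟨#J, fun i => c (e i), ?_, rfl⟩, ?_,
    ?_⟩
  · intro i j hij
    refine disjoint_left.2 fun x hxi hxj => hij (e.injective (Subtype.ext ?_))
    exact (huniq x _ hxi).trans (huniq x _ hxj).symm
  · intro x hx
    obtain ⟨i, -, hxi⟩ := mem_biUnion.1 hx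
    exact (mem_filter.1 (e i).2).2 hxi
  · intro x hx
    obtain ⟨hxs, hxS⟩ := mem_filter.1 hx
    have hJ : idx x ∈ J := by
      refine mem_filter.2 ⟨mem_image_of_mem idx hxs, fun y hy => ?_⟩
      obtain ⟨f, hf, rfl⟩ := mem_image.1 hy
      obtain ⟨f', hf', hx'⟩ := mem_image.1 (hidx x)
      have := hxS (f * f'⁻¹) (mul_mem_mul hf (inv_mem_inv hf'))
      rwa [← hx', mul_assoc, inv_mul_cancel_left] at this
    refine mem_biUnion.2 ⟨J.equivFin ⟨idx x, hJ⟩, mem_univ _, ?_⟩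
    simpa [e] using hidx x

lemma exists_large_isTranslateUnion {F : Finset G} {c : ℕ → G}
    (hc : ∀ x : G, ∃! i : ℕ, x ∈ F.image (· * c i)) {s : Finset G} {δ : ℝ}
    (hs : ∀ g ∈ F * F⁻¹, (#(s \ g • s) : ℝ) ≤ δ * #s) (hδ : 0 ≤ δ) :
    ∃ t, IsTranslateUnion F t ∧ t ⊆ s ∧ (#(s \ t) : ℝ) ≤ #F ^ 2 * δ * #s := by
  obtain ⟨t, ht, hts, hst⟩ := exists_isTranslateUnion_subset_superset_sInterior hc s
  refine ⟨t, ht, hts, ?_⟩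
  have hcard : (#(F * F⁻¹) : ℝ) ≤ #F ^ 2 := by
    rw [sq]; exact_mod_cast card_mul_le.trans_eq (by rw [card_inv])
  calc (#(s \ t) : ℝ) ≤ #(s \ s.sInterior (F * F⁻¹)) := by
        exact_mod_cast card_le_card (sdiff_subset_sdiff subset_rfl hst)
    _ ≤ #(F * F⁻¹) * δ * #s := card_sdiff_sInterior_le hs
    _ ≤ #F ^ 2 * δ * #s := by gcongr

end Combinatorics

section Tower

variable {G : Type*} [Group G] {Y : Type*} [MeasurableSpace Y] {ν : Measure Y}
  {Q : G → Y → Y}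

namespace IsMPAction

lemma image_eq_preimage (hQ : IsMPAction ν Q) (g : G) (A : Set Y) : Q g '' A = Q g⁻¹ ⁻¹' A :=
  congrFun (Set.image_eq_preimage_of_inverse (f := Q g) (g := Q g⁻¹)
    (fun y => by rw [← hQ.2.1, inv_mul_cancel, hQ.2.2])
    (fun y => by rw [← hQ.2.1, mul_inv_cancel, hQ.2.2])) A

lemma measurableSet_image (hQ : IsMPAction ν Q) (g : G) {A : Set Y} (hA : MeasurableSet A) :
    MeasurableSet (Q g '' A) := by
  rw [hQ.image_eq_preimage]
  exact (hQ.1 g⁻¹).measurable hA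

lemma measure_image (hQ : IsMPAction ν Q) (g : G) {A : Set Y} (hA : MeasurableSet A) :
    ν (Q g '' A) = ν A := by
  rw [hQ.image_eq_preimage]
  exact (hQ.1 g⁻¹).measure_preimage hA.nullMeasurableSet

lemma measure_biUnion_image (hQ : IsMPAction ν Q) {E : Set Y} (hE : MeasurableSet E)
    {t : Finset G} (ht : (t : Set G).PairwiseDisjoint fun g => Q g '' E) :
    ν (⋃ g ∈ t, Q g '' E) = #t * ν E := by
  rw [measure_biUnion_finset ht fun g _ => hQ.measurableSet_image g hE,
    sum_congr rfl fun g _ => hQ.measure_image g hE, sum_const, nsmul_eq_mul]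

lemma toReal_measure_biUnion_image_mul_card_of_subset (hQ : IsMPAction ν Q) {E : Set Y}
    (hE : MeasurableSet E) {s t : Finset G} (hs : (s : Set G).PairwiseDisjoint fun g => Q g '' E)
    (hts : t ⊆ s) :
    (ν (⋃ g ∈ t, Q g '' E)).toReal * #s = (ν (⋃ g ∈ s, Q g '' E)).toReal * #t := by
  rw [hQ.measure_biUnion_image hE hs, hQ.measure_biUnion_image hE (hs.subset hts)]
  simp only [ENNReal.toReal_mul, ENNReal.toReal_natCast]
  ring

end IsMPAction

end Tower

theorem tile_tower_lemma_general {G : Type*} [Group G] [Infinite G] [DecidableEq G]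
    {Y : Type*} [MeasurableSpace Y] (ν : Measure Y) [IsProbabilityMeasure ν]
    -- monotilable amenable: a Følner sequence of tiles
    (Fseq : ℕ → Finset G) (hFseqTile : ∀ i, IsTile (Fseq i))
    (hFolner : ∀ g : G, Tendsto
      (fun i => ((((Fseq i).image (g * ·) ∩ Fseq i).card : ℝ) / (Fseq i).card))
      atTop (𝓝 1))
    -- a free measure-preserving action `Q`
    (Q : G → Y → Y) (hQ : IsMPAction ν Q)
    -- Rokhlin lemma for `Q`
    (hRokhlin : ∀ δ : ℝ, 0 < δ → ∀ F' : Finset G, IsTile F' →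
      ∃ E : Set Y, MeasurableSet E ∧
        (∀ g ∈ F', ∀ h ∈ F', g ≠ h → Disjoint (Q g '' E) (Q h '' E)) ∧
        1 - δ ≤ (ν (⋃ g ∈ F', Q g '' E)).toReal)
    (C : Finset G) (ε : ℝ) (hε : 0 < ε) (F : Finset G) (hF : IsTile F) :
    ∃ G₀ : Finset G, ∃ E : Set Y,
      -- (1) `G₀` is a finite disjoint union of right translates of `F`
      (∃ n : ℕ, ∃ c : Fin n → G,
        (∀ i j : Fin n, i ≠ j → Disjoint (F.image (· * c i)) (F.image (· * c j))) ∧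
        G₀ = Finset.univ.biUnion fun i : Fin n => F.image (· * c i)) ∧
      -- (2) almost invariance under `C`
      (∀ g ∈ C, (((G₀.image (g * ·)) ∆ G₀).card : ℝ) < ε * G₀.card) ∧
      -- (3) `G₀` is much larger than `F`
      (3 * (F.card : ℝ) ^ 2 / G₀.card < ε) ∧
      -- (4) a Rokhlin tower over `G₀` of measure at least `1 − ε`
      (MeasurableSet E ∧
        (∀ g ∈ G₀, ∀ h ∈ G₀, g ≠ h → Disjoint (Q g '' E) (Q h '' E)) ∧
        1 - ε ≤ (ν (⋃ g ∈ G₀, Q g '' E)).toReal) := by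
  obtain ⟨c, hc⟩ := hF
  set K : ℝ := (F.card : ℝ)
  set δ : ℝ := min ε 1 / (8 * (K ^ 2 + 1))
  have hδ : 0 < δ := by positivity
  have hKδ : (K ^ 2 + 1) * δ = min ε 1 / 8 := by unfold δ; field_simp
  have hKδε : (K ^ 2 + 1) * δ ≤ ε / 8 := hKδ.trans_le (by gcongr; exact min_le_left _ _)
  have hKδ1 : (K ^ 2 + 1) * δ ≤ 1 / 8 := hKδ.trans_le (by gcongr; exact min_le_right _ _)
  obtain ⟨i, hinv, hbig⟩ := ((IsFolnerSeq.eventually_forall_card_sdiff_smul_le hFolner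
    (C ∪ F * F⁻¹) hδ).and ((tendsto_natCast_atTop_atTop.comp
      (IsFolnerSeq.tendsto_card hFolner)).eventually_gt_atTop (6 * K ^ 2 / ε))).exists
  replace hbig : 6 * K ^ 2 < #(Fseq i) * ε := (div_lt_iff₀ hε).1 hbig
  set F' := Fseq i
  obtain ⟨G₀, hG₀, hsub, hrest⟩ := exists_large_isTranslateUnion hc
    (fun g hg => hinv g (mem_union_right C hg)) hδ.le
  have hF'pos : (0 : ℝ) < #F' := by nlinarith
  have hG₀large : (1 - K ^ 2 * δ) * #F' ≤ #G₀ := by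
    have : (#(F' \ G₀) : ℝ) + #G₀ = #F' := by exact_mod_cast card_sdiff_add_card_eq_card hsub
    linarith
  have hG₀half : (#F' : ℝ) ≤ 2 * #G₀ := by nlinarith
  obtain ⟨E, hE, hEdisj, hEbig⟩ := hRokhlin δ hδ F' (hFseqTile i)
  refine ⟨G₀, E, hG₀, fun g hg => ?_, ?_, hE,
    fun g hg h hh => hEdisj g (hsub hg) h (hsub hh), ?_⟩
  · have hg' := hinv g (mem_union_left _ hg)
    have : (#((g • G₀) ∆ G₀) : ℝ) ≤ 2 * #(F' \ g • F') + 2 * #(F' \ G₀) := by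
      exact_mod_cast card_smul_symmDiff_le_of_subset g hsub
    change (#((g • G₀) ∆ G₀) : ℝ) < _
    nlinarith
  · rw [div_lt_iff₀ (by linarith)]
    nlinarith [mul_le_mul_of_nonneg_left hG₀half hε.le]
  · have htower := hQ.toReal_measure_biUnion_image_mul_card_of_subset hE hEdisj hsub
    have hlow : (1 - δ) * (1 - K ^ 2 * δ) ≤ (ν (⋃ g ∈ G₀, Q g '' E)).toReal := by
      refine le_of_mul_le_mul_right ?_ hF'pos
      rw [htower, mul_assoc]
      exact mul_le_mul hEbig hG₀large (by nlinarith) ENNReal.toReal_nonneg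
    nlinarith [mul_nonneg hδ.le (by positivity : 0 ≤ K ^ 2 * δ)]

/-- **Lemma (large invariant-like tiles with towers).**  Let `G` be a finitely generated
infinite monotilable amenable group (with a Følner sequence of tiles, and assuming the
Rokhlin lemma for the free action `Q`).  For any finite set `C ⊆ G`, any free
measure-preserving `G`-action `Q` on a probability space `Y`, any `ε > 0` and any tile
`F`, there exist a finite set `G₀ ⊆ G` and a measurable `E ⊆ Y` such that:
1. `G₀ = ⊔ᵢ F cᵢ` for a finite collection `{cᵢ}`;
2. `#(g G₀ △ G₀) < ε #G₀` for all `g ∈ C`;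
3. `3 (#F)² / #G₀ < ε`;
4. `{Q^g E}_{g ∈ G₀}` are pairwise disjoint with total measure at least `1 − ε`. -/
theorem tile_tower_lemma {G : Type*} [Group G] [Countable G] [Infinite G] [DecidableEq G]
    {Y : Type*} [MeasurableSpace Y] (ν : Measure Y) [IsProbabilityMeasure ν]
    -- finitely generated
    (hfg : ∃ Sgen : Finset G, Subgroup.closure (Sgen : Set G) = ⊤)
    -- monotilable amenable: a Følner sequence of tiles
    (Fseq : ℕ → Finset G) (hFseqTile : ∀ i, IsTile (Fseq i))
    (hFolner : ∀ g : G, Tendsto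
      (fun i => ((((Fseq i).image (g * ·) ∩ Fseq i).card : ℝ) / (Fseq i).card))
      atTop (𝓝 1))
    -- a free measure-preserving action `Q`
    (Q : G → Y → Y) (hQ : IsMPAction ν Q)
    (hfree : ν {y : Y | ∃ g : G, g ≠ 1 ∧ Q g y = y} = 0)
    -- Rokhlin lemma for `Q`
    (hRokhlin : ∀ δ : ℝ, 0 < δ → ∀ F' : Finset G, IsTile F' →
      ∃ E : Set Y, MeasurableSet E ∧
        (∀ g ∈ F', ∀ h ∈ F', g ≠ h → Disjoint (Q g '' E) (Q h '' E)) ∧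
        1 - δ ≤ (ν (⋃ g ∈ F', Q g '' E)).toReal)
    (C : Finset G) (ε : ℝ) (hε : 0 < ε) (F : Finset G) (hF : IsTile F) :
    ∃ G₀ : Finset G, ∃ E : Set Y,
      -- (1) `G₀` is a finite disjoint union of right translates of `F`
      (∃ n : ℕ, ∃ c : Fin n → G,
        (∀ i j : Fin n, i ≠ j → Disjoint (F.image (· * c i)) (F.image (· * c j))) ∧
        G₀ = Finset.univ.biUnion fun i : Fin n => F.image (· * c i)) ∧
      -- (2) almost invariance under `C`
      (∀ g ∈ C, (((G₀.image (g * ·)) ∆ G₀).card : ℝ) < ε * G₀.card) ∧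
      -- (3) `G₀` is much larger than `F`
      (3 * (F.card : ℝ) ^ 2 / G₀.card < ε) ∧
      -- (4) a Rokhlin tower over `G₀` of measure at least `1 − ε`
      (MeasurableSet E ∧
        (∀ g ∈ G₀, ∀ h ∈ G₀, g ≠ h → Disjoint (Q g '' E) (Q h '' E)) ∧
        1 - ε ≤ (ν (⋃ g ∈ G₀, Q g '' E)).toReal) :=
  tile_tower_lemma_general ν Fseq hFseqTile hFolner Q hQ hRokhlin C ε hε F hF
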